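/- arXiv:1805.01767 — 5 statements merged into one kernel-verified Lean document; each statement's English description precedes it below -/
import Mathlib

section
/- Let M be the n×n complex matrix with diagonal entries 1−w_i, entries w_i in position (i, i+1) (indices mod n, so entry (n,1) equals w_n), and zeros elsewhere. Then the characteristic polynomial of M−I is p(x) = ∏_{i=1}^n (x + w_i) − ∏_{i=1}^n w_i. -/
/-- The polygon transformation matrix: diagonal entries `1 - w i`,
cyclic superdiagonal entries `w i` (entry `(i, i+1 mod n)`), zeros elsewhere. -/
def polyMat (n : ℕ) [NeZero n] (w : Fin n → ℂ) : Matrix (Fin n) (Fin n) ℂ :=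
  Matrix.of fun i j => if j = i then 1 - w i else if j = i + 1 then w i else 0

/-!
The characteristic matrix `X - (M - 1)` is cyclically bidiagonal: `X + w i` on the diagonal,
`-w i` at `(i, i + 1)`. In the Leibniz expansion of such a determinant only permutations with
`σ i ∈ {i, i + 1}` survive, and these are the identity and the full rotation `i ↦ i + 1`;
they contribute `∏ (X + w i)` and `sign · ∏ (-w i) = (-1)^(n-1) (-1)^n ∏ w i = -∏ w i`.
-/

open Polynomial Matrix Equiv

namespace Fin

variable {n : ℕ} [NeZero n]

theorem add_one_ne_self (hn : 2 ≤ n) (i : Fin n) : i + 1 ≠ i := by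
  intro h
  have h₁ : (1 : Fin n) = 0 := by simpa using h
  rw [Fin.ext_iff, Fin.val_one', Fin.val_zero, Nat.mod_eq_of_lt (by omega)] at h₁
  omega

open Fin.NatCast Fin.CommRing in
/-- Moved points propagate around the cycle: `σ j ≠ j` forces `σ j = j + 1`, and then
`σ (j + 1) ≠ j + 1` by injectivity. -/
theorem perm_eq_finRotate_of_forall_apply_eq_or_eq_add_one {σ : Perm (Fin n)}
    (hσ : ∀ i, σ i = i ∨ σ i = i + 1) {i₀ : Fin n} (hi₀ : σ i₀ ≠ i₀) : σ = finRotate n := by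
  have moved : ∀ k : ℕ, σ (i₀ + k) ≠ i₀ + k := by
    intro k
    induction k with
    | zero => simpa using hi₀
    | succ k ih =>
      have hk : σ (i₀ + k) = i₀ + k + 1 := (hσ _).resolve_left ih
      intro h
      rw [Nat.cast_succ, ← add_assoc] at h
      exact ih (hk.trans (σ.injective (h.trans hk.symm)))
  ext j
  have hj : i₀ + ((j - i₀ : Fin n).val : Fin n) = j := by
    rw [Fin.cast_val_eq_self, add_sub_cancel]
  rw [finRotate_apply, ← hj]
  exact congrArg Fin.val ((hσ _).resolve_left (moved _))

theorem perm_eq_one_or_finRotate_of_forall_apply_eq_or_eq_add_one {σ : Perm (Fin n)}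
    (hσ : ∀ i, σ i = i ∨ σ i = i + 1) : σ = 1 ∨ σ = finRotate n := by
  by_cases hfix : ∀ i, σ i = i
  · exact Or.inl (Equiv.ext hfix)
  · push Not at hfix
    obtain ⟨i₀, hi₀⟩ := hfix
    exact Or.inr (perm_eq_finRotate_of_forall_apply_eq_or_eq_add_one hσ hi₀)

end Fin

namespace Matrix

variable {R : Type*} [CommRing R] {n : ℕ} [NeZero n]

theorem det_of_cyclic_bidiagonal (hn : 2 ≤ n) (A : Matrix (Fin n) (Fin n) R)
    (hA : ∀ i j, j ≠ i → j ≠ i + 1 → A i j = 0) :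
    A.det = ∏ i, A i i + (-1) ^ (n + 1) * ∏ i, A i (i + 1) := by
  have vanish : ∀ σ ∉ ({1, finRotate n} : Finset (Perm (Fin n))),
      (Perm.sign σ : R) * ∏ i, Aᵀ (σ i) i = 0 := by
    intro σ hσ
    obtain ⟨i, hi⟩ : ∃ i, ¬(σ i = i ∨ σ i = i + 1) := by
      by_contra! h
      rcases Fin.perm_eq_one_or_finRotate_of_forall_apply_eq_or_eq_add_one h with h | h <;>
        simp [h] at hσ
    push Not at hi
    rw [Finset.prod_eq_zero (Finset.mem_univ i) (hA i (σ i) hi.1 hi.2), mul_zero]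
  have one_ne : (1 : Perm (Fin n)) ≠ finRotate n := fun h =>
    Fin.add_one_ne_self hn 0 (by rw [← finRotate_apply, ← h, Perm.one_apply])
  have sign_finRotate' : (Perm.sign (finRotate n) : R) = (-1) ^ (n + 1) := by
    obtain ⟨m, rfl⟩ : ∃ m, n = m + 1 := ⟨n - 1, by omega⟩
    simp [sign_finRotate, pow_succ]
  rw [← det_transpose, det_apply', ← Finset.sum_subset (Finset.subset_univ _) (fun σ _ => vanish σ),
    Finset.sum_pair one_ne, sign_finRotate']
  simp

end Matrix

section PolyMat

variable {n : ℕ} [NeZero n] (w : Fin n → ℂ)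

theorem charmatrix_polyMat_sub_one_apply_self (i : Fin n) :
    charmatrix (polyMat n w - 1) i i = X + C (w i) := by
  simp [charmatrix_apply_eq, polyMat]

theorem charmatrix_polyMat_sub_one_apply_add_one (hn : 2 ≤ n) (i : Fin n) :
    charmatrix (polyMat n w - 1) i (i + 1) = -C (w i) := by
  have hne := Fin.add_one_ne_self hn i
  simp [charmatrix_apply_ne _ _ _ hne.symm, polyMat, hne, one_apply_ne hne.symm]

theorem charmatrix_polyMat_sub_one_apply_of_ne {i j : Fin n} (hj : j ≠ i) (hj' : j ≠ i + 1) :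
    charmatrix (polyMat n w - 1) i j = 0 := by
  simp [charmatrix_apply_ne _ _ _ hj.symm, polyMat, hj, hj', one_apply_ne hj.symm]

end PolyMat

theorem charpoly_polyMat_sub_one {n : ℕ} [NeZero n] (hn : 2 ≤ n) (w : Fin n → ℂ) :
    (polyMat n w - 1).charpoly =
      (∏ i : Fin n, (Polynomial.X + Polynomial.C (w i))) - Polynomial.C (∏ i : Fin n, w i) := by
  rw [charpoly, det_of_cyclic_bidiagonal hn _
    (fun _ _ => charmatrix_polyMat_sub_one_apply_of_ne w)]
  simp only [charmatrix_polyMat_sub_one_apply_self, charmatrix_polyMat_sub_one_apply_add_one w hn,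
    Finset.prod_neg, Finset.card_univ, Fintype.card_fin, map_prod]
  rw [← mul_assoc, ← pow_add, Odd.neg_one_pow ⟨n, by ring⟩, neg_one_mul, sub_eq_add_neg]
end

section
/- Let M be the n×n complex matrix with (Mz)_i = (1−w_i) z_i + w_i z_{i+1} (indices mod n), with w_1 = 0 and all w_2, …, w_n nonzero and pairwise distinct. Fix k with 2 ≤ k ≤ n and define v ∈ ℂ^n by v_1 = 0, v_2 = 1, v_i = ∏_{j=2}^{i−1} (w_j − w_k)/w_j for 3 ≤ i ≤ k, and v_i = 0 for i > k. Then M v = (1 − w_k) v, i.e., v is an eigenvector of M with eigenvalue 1 − w_k. -/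
open Finset Matrix

theorem Fin.add_one_eq_zero_or_val_add_one {n : ℕ} [NeZero n] (i : Fin n) :
    i + 1 = 0 ∨ (i + 1).val = i.val + 1 := by
  by_cases hi : i.val + 1 < n
  · exact .inr (Fin.val_add_one_of_lt' hi)
  · refine .inl (Fin.ext ?_)
    rw [Fin.val_add, Fin.val_one', Nat.add_mod_mod, show i.val + 1 = n by omega]
    simp

theorem Fin.prod_Ico_add_one {n : ℕ} [NeZero n] {M : Type*} [CommMonoid M] (f : Fin n → M)
    {a i : Fin n} (hai : a ≤ i) (hi : i.val + 1 < n) :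
    ∏ j ∈ Ico a (i + 1), f j = (∏ j ∈ Ico a i, f j) * f i := by
  have hIco : Ico a (i + 1) = insert i (Ico a i) := by
    ext j
    simp only [mem_Ico, mem_insert, Fin.le_def, Fin.lt_def, Fin.ext_iff,
      Fin.val_add_one_of_lt' hi] at hai ⊢
    omega
  rw [hIco, prod_insert right_notMem_Ico, mul_comm]

section PolyMat

variable {n : ℕ} [NeZero n]

theorem polyMat_mulVec_apply (hn : 2 ≤ n) (w v : Fin n → ℂ) (i : Fin n) :
    (polyMat n w *ᵥ v) i = (1 - w i) * v i + w i * v (i + 1) := by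
  have hi : i + 1 ≠ i := by simp only [ne_eq, add_eq_left, Fin.one_eq_zero_iff]; omega
  have hentry : ∀ j, polyMat n w i j =
      (if j = i then 1 - w i else 0) + (if j = i + 1 then w i else 0) := by
    intro j
    by_cases hj : j = i
    · simp [polyMat, hj, hi.symm]
    · simp [polyMat, hj]
  simp only [Matrix.mulVec, dotProduct, hentry, add_mul, ite_mul, zero_mul, sum_add_distrib,
    sum_ite_eq', mem_univ, if_true]

theorem polyMat_mulVec_eq_smul_iff (hn : 2 ≤ n) (w v : Fin n → ℂ) (c : ℂ) :
    polyMat n w *ᵥ v = (1 - c) • v ↔ ∀ i, w i * v (i + 1) = (w i - c) * v i := by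
  simp only [funext_iff, polyMat_mulVec_apply hn, Pi.smul_apply, smul_eq_mul]
  refine forall_congr' fun i => ⟨fun h => ?_, fun h => ?_⟩ <;> linear_combination h

noncomputable def polyEigenvector (w : Fin n → ℂ) (k : Fin n) : Fin n → ℂ := fun i =>
  if i = 0 then 0 else if i ≤ k then ∏ j ∈ Ico (1 : Fin n) i, (w j - w k) / w j else 0

variable {w : Fin n → ℂ} {k : Fin n}

theorem polyEigenvector_zero : polyEigenvector w k 0 = 0 := if_pos rfl

theorem polyEigenvector_of_lt {i : Fin n} (hki : k < i) : polyEigenvector w k i = 0 := by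
  simp [polyEigenvector, not_le.mpr hki]

theorem polyEigenvector_add_one_of_le {i : Fin n} (hki : k ≤ i) :
    polyEigenvector w k (i + 1) = 0 := by
  rcases i.add_one_eq_zero_or_val_add_one with h | h
  · rw [h, polyEigenvector_zero]
  · exact polyEigenvector_of_lt (Fin.lt_def.mpr (by omega))

theorem polyEigenvector_add_one_of_lt {i : Fin n} (hi : i ≠ 0) (hik : i < k) :
    polyEigenvector w k (i + 1) = polyEigenvector w k i * ((w i - w k) / w i) := by
  have hlt : i.val + 1 < n := by omega
  have hval := Fin.val_add_one_of_lt' hlt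
  have h1 : (1 : Fin n) ≤ i := by
    rw [Fin.le_def, Fin.val_one', Nat.mod_eq_of_lt (by omega)]
    exact Nat.one_le_iff_ne_zero.mpr (Fin.val_ne_of_ne hi)
  have hne : i + 1 ≠ 0 := fun h => by simp [h] at hval
  have hle : i + 1 ≤ k := Fin.le_def.mpr (by omega)
  simp only [polyEigenvector, hne, hi, hle, hik.le, if_false, if_true,
    Fin.prod_Ico_add_one _ h1 hlt]

theorem polyEigenvector_recurrence (hw0 : w 0 = 0) (hw : ∀ i, i ≠ 0 → w i ≠ 0) (i : Fin n) :
    w i * polyEigenvector w k (i + 1) = (w i - w k) * polyEigenvector w k i := by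
  by_cases hi : i = 0
  · rw [hi, hw0, polyEigenvector_zero]; ring
  rcases lt_or_ge i k with hik | hki
  · rw [polyEigenvector_add_one_of_lt hi hik]
    field_simp [hw i hi]
  · rw [polyEigenvector_add_one_of_le hki]
    rcases hki.lt_or_eq with hki | rfl
    · rw [polyEigenvector_of_lt hki]; ring
    · ring

end PolyMat

theorem eigenvector_polyMat_general {n : ℕ} [NeZero n] (hn : 2 ≤ n) (w : Fin n → ℂ)
    (hw0 : w 0 = 0) (hw : ∀ i : Fin n, i ≠ 0 → w i ≠ 0)
    (k : Fin n)
    (v : Fin n → ℂ)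
    (hv : v = fun i => if i = 0 then 0
      else if i ≤ k then ∏ j ∈ Finset.Ico (1 : Fin n) i, (w j - w k) / w j
      else 0) :
    (polyMat n w).mulVec v = (1 - w k) • v := by
  subst hv
  exact (polyMat_mulVec_eq_smul_iff hn w _ _).mpr (polyEigenvector_recurrence hw0 hw)

/-- With `w 0 = 0`, the nonzero weights pairwise distinct, and `k ≠ 0`, the explicitly
given vector `v` is an eigenvector of `M` with eigenvalue `1 - w k`.
(Indices are 0-based: `w 0` plays the role of `w_1` in the paper, etc.) -/
theorem eigenvector_polyMat {n : ℕ} [NeZero n] (hn : 2 ≤ n) (w : Fin n → ℂ)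
    (hw0 : w 0 = 0) (hw : ∀ i : Fin n, i ≠ 0 → w i ≠ 0)
    (hdist : ∀ i j : Fin n, i ≠ 0 → j ≠ 0 → i ≠ j → w i ≠ w j)
    (k : Fin n) (hk : k ≠ 0)
    (v : Fin n → ℂ)
    (hv : v = fun i => if i = 0 then 0
      else if i ≤ k then ∏ j ∈ Finset.Ico (1 : Fin n) i, (w j - w k) / w j
      else 0) :
    (polyMat n w).mulVec v = (1 - w k) • v :=
  eigenvector_polyMat_general hn w hw0 hw k v hv
end

section
/- Let v ∈ ℂ³ with v_{i+1} ≠ v_i for all i mod 3, and let w̃_i = v_i/(v_{i+1} − v_i). Let M̃ be the 3×3 matrix with (M̃z)_i = (1 − w̃_i) z_i + w̃_i z_{i+1} (indices mod 3). Then the eigenvalues of M̃ − I are 0, 1, and μ := w̃_1 w̃_2 + w̃_2 w̃_3 + w̃_3 w̃_1. -/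
/-!
Since `1 + w̃ᵢ = vᵢ₊₁ / (vᵢ₊₁ - vᵢ)`, reindexing the numerators cyclically gives
`∏ (1 + w̃ᵢ) = ∏ w̃ᵢ`, i.e. `1 + e₁(w̃) + e₂(w̃) = 0`. On the other hand `M̃ - I = diag(w̃) (P - I)`
with `P` the cyclic shift, so its determinant vanishes and its characteristic polynomial is
`x³ + e₁(w̃) x² + e₂(w̃) x`; substituting `e₁(w̃) = -1 - μ` factors it as `x (x - 1) (x - μ)`.
-/

/-- The 3×3 polygon transformation matrix. -/
def polyMat3 (w : Fin 3 → ℂ) : Matrix (Fin 3) (Fin 3) ℂ :=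
  Matrix.of fun i j => if j = i then 1 - w i else if j = i + 1 then w i else 0

theorem prod_one_add_div_sub_eq_prod_div_sub {K : Type*} [Field K] {n : ℕ} [NeZero n]
    (v : Fin n → K) (hv : ∀ i, v (i + 1) ≠ v i) :
    ∏ i, (1 + v i / (v (i + 1) - v i)) = ∏ i, v i / (v (i + 1) - v i) := by
  have hsub : ∀ i, v (i + 1) - v i ≠ 0 := fun i => sub_ne_zero.mpr (hv i)
  have hshift : ∏ i, v (i + 1) = ∏ i, v i :=
    Fintype.prod_equiv (Equiv.addRight 1) _ _ fun _ => rfl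
  calc ∏ i, (1 + v i / (v (i + 1) - v i))
      = ∏ i, v (i + 1) / (v (i + 1) - v i) :=
        Finset.prod_congr rfl fun i _ => by field_simp [hsub i]; ring
    _ = ∏ i, v i / (v (i + 1) - v i) := by
        rw [Finset.prod_div_distrib, Finset.prod_div_distrib, hshift]

theorem one_add_sum_add_sum_mul_eq_zero {K : Type*} [Field K] (v : Fin 3 → K)
    (hv : ∀ i : Fin 3, v (i + 1) ≠ v i) (w : Fin 3 → K)
    (hw : ∀ i, w i = v i / (v (i + 1) - v i)) :
    1 + (w 0 + w 1 + w 2) + (w 0 * w 1 + w 1 * w 2 + w 2 * w 0) = 0 := by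
  have h := prod_one_add_div_sub_eq_prod_div_sub v hv
  simp only [← hw, Fin.prod_univ_three] at h
  linear_combination h

theorem polyMat3_sub_one (w : Fin 3 → ℂ) :
    polyMat3 w - 1 = !![-w 0, w 0, 0; 0, -w 1, w 1; w 2, 0, -w 2] := by
  ext i j
  fin_cases i <;> fin_cases j <;> simp [polyMat3]

open Polynomial in
theorem charpoly_polyMat3_sub_one (w : Fin 3 → ℂ) :
    (polyMat3 w - 1).charpoly =
      X ^ 3 + C (w 0 + w 1 + w 2) * X ^ 2 + C (w 0 * w 1 + w 1 * w 2 + w 2 * w 0) * X := by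
  rw [polyMat3_sub_one, Matrix.charpoly, Matrix.det_fin_three]
  simp only [Matrix.charmatrix_apply_eq, Matrix.charmatrix_apply_ne, ne_eq, Fin.reduceEq,
    not_false_eq_true, Matrix.of_apply, Matrix.cons_val, map_neg, map_zero, map_add, map_mul]
  ring

open Polynomial in
/-- For a triangle `v` with weights `w̃ i = v i/(v (i+1) - v i)`, the eigenvalues of
`M̃ - I` are `0`, `1` and `μ = w̃₁w̃₂ + w̃₂w̃₃ + w̃₃w̃₁`: the characteristic polynomial
of `M̃ - I` is `x (x - 1) (x - μ)`. -/
theorem charpoly_triangle (v : Fin 3 → ℂ) (hv : ∀ i : Fin 3, v (i + 1) ≠ v i)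
    (w : Fin 3 → ℂ) (hw : ∀ i, w i = v i / (v (i + 1) - v i))
    (μ : ℂ) (hμ : μ = w 0 * w 1 + w 1 * w 2 + w 2 * w 0) :
    (polyMat3 w - 1).charpoly = X * (X - 1) * (X - C μ) := by
  have htrace : w 0 + w 1 + w 2 = -1 - μ := by
    linear_combination hμ + one_add_sum_add_sum_mul_eq_zero v hv w hw
  rw [charpoly_polyMat3_sub_one, htrace, ← hμ]
  simp only [C_sub, C_neg, C_1]
  ring
end

section
/- Let v ∈ ℂ³ with v_{i+1} ≠ v_i for all i mod 3, w̃_i = v_i/(v_{i+1} − v_i), μ = w̃_1 w̃_2 + w̃_2 w̃_3 + w̃_3 w̃_1 ≠ 0, and w_i = −w̃_i/μ. Let M be the 3×3 matrix with (Mz)_i = (1 − w_i)z_i + w_i z_{i+1}. Then for every z ∈ ℂ³, Mz lies in the span of (1,1,1)^⊤ and v; i.e., M z = α(1,1,1)^⊤ + β v for some α, β ∈ ℂ. -/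
/-!
`u ∈ ℂ³` lies in the span of `(1,1,1)` and a non-constant `v` exactly when the determinant with
rows `1, v, u` vanishes. For `u = M z` this determinant is linear in `z`, and the coefficient of
`z i` is `(v (i+2) - v (i+1)) (1 - w i) + (v (i+1) - v i) w (i+2)`. After clearing denominators,
each of these three coefficients is a multiple of the relation defining `μ`, so all vanish.
-/

open Matrix

variable {K : Type*} [Field K]

lemma det_of_one_vec_vec (v u : Fin 3 → K) :
    det (of ![1, v, u]) = (v 2 - v 1) * u 0 + (v 0 - v 2) * u 1 + (v 1 - v 0) * u 2 := by
  simp [det_fin_three]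
  ring

lemma exists_eq_const_add_mul_of_det_eq_zero {v u : Fin 3 → K} (hv : v 1 ≠ v 0)
    (h : det (of ![1, v, u]) = 0) : ∃ α β : K, u = fun i => α + β * v i := by
  have hv' : v 1 - v 0 ≠ 0 := sub_ne_zero.mpr hv
  rw [det_of_one_vec_vec] at h
  refine ⟨(v 1 * u 0 - v 0 * u 1) / (v 1 - v 0), (u 1 - u 0) / (v 1 - v 0), funext fun i => ?_⟩
  fin_cases i <;> simp only [Fin.zero_eta, Fin.mk_one, Fin.reduceFinMk] <;> field_simp
  · ring
  · ring
  · linear_combination h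

lemma det_triangle_map_eq_zero {v w : Fin 3 → K}
    (hw : ∀ i, (v (i + 2) - v (i + 1)) * (1 - w i) + (v (i + 1) - v i) * w (i + 2) = 0)
    (z : Fin 3 → K) : det (of ![1, v, fun i => (1 - w i) * z i + w i * z (i + 1)]) = 0 := by
  have h0 := hw 0
  have h1 := hw 1
  have h2 := hw 2
  simp only [Fin.isValue, Fin.reduceAdd] at h0 h1 h2
  rw [det_of_one_vec_vec]
  simp only [Fin.isValue, Fin.reduceAdd]
  linear_combination z 0 * h0 + z 1 * h1 + z 2 * h2

lemma triangle_weights_balanced {v wt w : Fin 3 → K} {μ : K} (hv : ∀ i : Fin 3, v (i + 1) ≠ v i)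
    (hwt : ∀ i, wt i = v i / (v (i + 1) - v i))
    (hμ : μ = wt 0 * wt 1 + wt 1 * wt 2 + wt 2 * wt 0) (hμ0 : μ ≠ 0)
    (hw : ∀ i, w i = -wt i / μ) (i : Fin 3) :
    (v (i + 2) - v (i + 1)) * (1 - w i) + (v (i + 1) - v i) * w (i + 2) = 0 := by
  have h0 := sub_ne_zero.mpr (hv 0)
  have h1 := sub_ne_zero.mpr (hv 1)
  have h2 := sub_ne_zero.mpr (hv 2)
  simp only [Fin.isValue, Fin.reduceAdd] at h0 h1 h2
  have hμ_mul : μ * ((v 1 - v 0) * (v 2 - v 1) * (v 0 - v 2)) =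
      v 0 * v 1 * (v 0 - v 2) + v 1 * v 2 * (v 1 - v 0) + v 2 * v 0 * (v 2 - v 1) := by
    simp only [hμ, hwt, Fin.isValue, Fin.reduceAdd]
    field_simp
  fin_cases i <;>
    simp only [hw, hwt, Fin.zero_eta, Fin.mk_one, Fin.reduceFinMk, Fin.isValue, Fin.reduceAdd] <;>
    field_simp <;> linear_combination hμ_mul

/-- One-step convergence for triangles: with weights `w i = -w̃ i/μ`, one application of the
transformation maps any initial triangle `z` into the span of the all-ones vector and `v`. -/
theorem triangle_one_step (v : Fin 3 → ℂ) (hv : ∀ i : Fin 3, v (i + 1) ≠ v i)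
    (wt : Fin 3 → ℂ) (hwt : ∀ i, wt i = v i / (v (i + 1) - v i))
    (μ : ℂ) (hμ : μ = wt 0 * wt 1 + wt 1 * wt 2 + wt 2 * wt 0) (hμ0 : μ ≠ 0)
    (w : Fin 3 → ℂ) (hw : ∀ i, w i = -wt i / μ) :
    ∀ z : Fin 3 → ℂ, ∃ α β : ℂ,
      (fun i : Fin 3 => (1 - w i) * z i + w i * z (i + 1)) = fun i => α + β * v i := fun z =>
  exists_eq_const_add_mul_of_det_eq_zero (hv 0)
    (det_triangle_map_eq_zero (triangle_weights_balanced hv hwt hμ hμ0 hw) z)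
end

section
/- For complex numbers μ_2, μ_3 with |μ_2| > 1 and |μ_3| > 1, let ω_i = (1 − conj(μ_i))/(|μ_i|² − 1) for i = 2,3 and suppose ω_2 ≠ ω_3 and |ω_2| + |ω_3| > |ω_3 − ω_2|. Then λ := ω_2 + ((ω_3 − ω_2)/|ω_3 − ω_2|)·(|ω_2| + |ω_3 − ω_2| − |ω_3|)/2 satisfies |λ − ω_2| < |ω_2| and |λ − ω_3| < |ω_3|, hence |1+λ| > |1+λμ_2| and |1+λ| > |1+λμ_3|. -/
/-!
Writing `s = |μ|² - 1` and `ω = (1 - conj μ) / s`, one has the identity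
`|1 + λ|² - |1 + λμ|² = s (|ω|² - |λ - ω|²)`, so for `|μ| > 1` the set of `λ` with
`|1 + λμ| < |1 + λ|` is exactly the open disc `D(ω, |ω|)`. The tabulated `λ` lies on the segment
`[ω₂, ω₃]` at the distance from `ω₂` that leaves equal room `(|ω₂| + |ω₃| - |ω₃ - ω₂|) / 2` to
both boundary circles, and this room is positive precisely when the two discs meet.
-/

open ComplexConjugate

section LensPoint

variable {E : Type*} [NormedAddCommGroup E] [NormedSpace ℝ E]

theorem norm_div_norm_smul_le (v : E) {r : ℝ} (hr : 0 ≤ r) : ‖(r / ‖v‖) • v‖ ≤ r := by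
  rcases eq_or_ne v 0 with rfl | hv
  · simpa using hr
  · rw [norm_smul, Real.norm_of_nonneg (by positivity), div_mul_cancel₀ _ (norm_ne_zero_iff.2 hv)]

theorem add_div_norm_smul_sub_eq (a b : E) (t : ℝ) :
    a + (t / ‖b - a‖) • (b - a) = b + ((‖a - b‖ - t) / ‖a - b‖) • (a - b) := by
  rcases eq_or_ne (b - a) 0 with hba | hba
  · rw [sub_eq_zero.1 hba]; simp
  · rw [norm_sub_rev a b, sub_div, div_self (norm_ne_zero_iff.2 hba)]
    module

noncomputable def lensPoint (a b : E) : E := a + ((‖a‖ + ‖b - a‖ - ‖b‖) / 2 / ‖b - a‖) • (b - a)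

theorem norm_lensPoint_sub_lt {a b : E} (h : ‖b - a‖ < ‖a‖ + ‖b‖) :
    ‖lensPoint a b - a‖ < ‖a‖ ∧ ‖lensPoint a b - b‖ < ‖b‖ := by
  have hb := norm_sub_norm_le b a
  have ha := norm_sub_norm_le a b
  have hab := norm_sub_rev a b
  constructor
  · rw [lensPoint, add_sub_cancel_left]
    refine (norm_div_norm_smul_le (b - a) ?_).trans_lt ?_ <;> linarith
  · rw [lensPoint, add_div_norm_smul_sub_eq, add_sub_cancel_left]
    refine (norm_div_norm_smul_le (a - b) ?_).trans_lt ?_ <;> linarith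

end LensPoint

noncomputable def discCenter (μ : ℂ) : ℂ := (1 - conj μ) / ((‖μ‖ ^ 2 - 1 : ℝ) : ℂ)

theorem norm_one_add_sq_sub_norm_one_add_mul_sq {μ : ℂ} (hμ : ‖μ‖ ^ 2 - 1 ≠ 0) (l : ℂ) :
    ‖1 + l‖ ^ 2 - ‖1 + l * μ‖ ^ 2 =
      (‖μ‖ ^ 2 - 1) * (‖discCenter μ‖ ^ 2 - ‖l - discCenter μ‖ ^ 2) := by
  set s := ‖μ‖ ^ 2 - 1 with hs
  have hω : discCenter μ * s = 1 - conj μ := div_mul_cancel₀ _ (Complex.ofReal_ne_zero.2 hμ)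
  have hre : (discCenter μ).re * s = 1 - μ.re := by simpa using congrArg Complex.re hω
  have him : (discCenter μ).im * s = μ.im := by simpa using congrArg Complex.im hω
  have hμsq : ‖μ‖ ^ 2 = μ.re ^ 2 + μ.im ^ 2 := by rw [Complex.sq_norm, Complex.normSq_apply]; ring
  simp only [Complex.sq_norm, Complex.normSq_apply, Complex.add_re, Complex.add_im,
    Complex.mul_re, Complex.mul_im, Complex.sub_re, Complex.sub_im, Complex.one_re, Complex.one_im]
  linear_combination (-2 * l.re) * hre - (2 * l.im) * him + (l.re ^ 2 + l.im ^ 2) * (hs + hμsq)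

theorem norm_one_add_mul_lt_norm_one_add_iff {μ : ℂ} (hμ : 1 < ‖μ‖) (l : ℂ) :
    ‖1 + l * μ‖ < ‖1 + l‖ ↔ ‖l - discCenter μ‖ < ‖discCenter μ‖ := by
  have hs : 0 < ‖μ‖ ^ 2 - 1 := by nlinarith
  rw [← sq_lt_sq₀ (norm_nonneg _) (norm_nonneg _), ← sq_lt_sq₀ (norm_nonneg _) (norm_nonneg _),
    ← sub_pos, norm_one_add_sq_sub_norm_one_add_mul_sq hs.ne', ← sub_pos (b := ‖l - _‖ ^ 2)]
  exact ⟨fun h ↦ pos_of_mul_pos_right h hs.le, mul_pos hs⟩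

theorem quadrangle_case_both_gt_one_general (μ₂ μ₃ : ℂ)
    (h2 : 1 < ‖μ₂‖) (h3 : 1 < ‖μ₃‖)
    (ω₂ ω₃ : ℂ)
    (hω₂ : ω₂ = (1 - (starRingEnd ℂ) μ₂) / (((‖μ₂‖) ^ 2 - 1 : ℝ) : ℂ))
    (hω₃ : ω₃ = (1 - (starRingEnd ℂ) μ₃) / (((‖μ₃‖) ^ 2 - 1 : ℝ) : ℂ))
    (hint : ‖ω₃ - ω₂‖ < ‖ω₂‖ + ‖ω₃‖)
    (l : ℂ)
    (hl : l = ω₂ + (ω₃ - ω₂) / ((‖ω₃ - ω₂‖ : ℝ) : ℂ) *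
        (((‖ω₂‖ + ‖ω₃ - ω₂‖ - ‖ω₃‖) / 2 : ℝ) : ℂ)) :
    ‖l - ω₂‖ < ‖ω₂‖ ∧ ‖l - ω₃‖ < ‖ω₃‖ ∧
      ‖1 + l * μ₂‖ < ‖1 + l‖ ∧
      ‖1 + l * μ₃‖ < ‖1 + l‖ := by
  have hl_lens : l = lensPoint ω₂ ω₃ := by
    rw [hl, lensPoint, Complex.real_smul]; push_cast; ring
  obtain ⟨hl₂, hl₃⟩ := hl_lens ▸ norm_lensPoint_sub_lt hint
  refine ⟨hl₂, hl₃, ?_, ?_⟩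
  · rw [hω₂] at hl₂; exact (norm_one_add_mul_lt_norm_one_add_iff h2 l).2 hl₂
  · rw [hω₃] at hl₃; exact (norm_one_add_mul_lt_norm_one_add_iff h3 l).2 hl₃

/-- Case `|μ₂| > 1 ∧ |μ₃| > 1` of the quadrangle table: if the two discs `D(ωᵢ, |ωᵢ|)`
intersect, the tabulated `λ` lies in both discs, hence in `Λ_{μ₂} ∩ Λ_{μ₃}`. -/
theorem quadrangle_case_both_gt_one (μ₂ μ₃ : ℂ)
    (h2 : 1 < ‖μ₂‖) (h3 : 1 < ‖μ₃‖)
    (ω₂ ω₃ : ℂ)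
    (hω₂ : ω₂ = (1 - (starRingEnd ℂ) μ₂) / (((‖μ₂‖) ^ 2 - 1 : ℝ) : ℂ))
    (hω₃ : ω₃ = (1 - (starRingEnd ℂ) μ₃) / (((‖μ₃‖) ^ 2 - 1 : ℝ) : ℂ))
    (hne : ω₂ ≠ ω₃)
    (hint : ‖ω₃ - ω₂‖ < ‖ω₂‖ + ‖ω₃‖)
    (l : ℂ)
    (hl : l = ω₂ + (ω₃ - ω₂) / ((‖ω₃ - ω₂‖ : ℝ) : ℂ) *
        (((‖ω₂‖ + ‖ω₃ - ω₂‖ - ‖ω₃‖) / 2 : ℝ) : ℂ)) :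
    ‖l - ω₂‖ < ‖ω₂‖ ∧ ‖l - ω₃‖ < ‖ω₃‖ ∧
      ‖1 + l * μ₂‖ < ‖1 + l‖ ∧
      ‖1 + l * μ₃‖ < ‖1 + l‖ :=
  quadrangle_case_both_gt_one_general μ₂ μ₃ h2 h3 ω₂ ω₃ hω₂ hω₃ hint l hl
end
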